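/- Each vertex window v_i (v_{i,k} = 1/(2i) for 1 ≤ |k| ≤ i, else 0) is an extreme point of the convex polytope W of symmetric tapered probability windows. -/

import Mathlib

/-!
Write `v = a • w₁ + b • w₂` with `a, b > 0` and `w₁, w₂ ∈ W`. Where `v` vanishes, nonnegativity
forces `w₁` to vanish; on `[1, i]`, where `v` is constant, the monotonicity of `w₁` and `w₂` forces
both to be constant. A window of `W` that is constant on `1 ≤ |k| ≤ i` and vanishes elsewhere is
pinned down by its total mass, so `w₁ = v`.
-/

open Finset

/-- The class of symmetric tapered probability windows supported on `{-K,…,K}`. -/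
def TaperedWindow (K : ℕ) (w : ℤ → ℝ) : Prop :=
  w 0 = 0 ∧
  (∀ k : ℤ, w k = w (-k)) ∧
  (∀ j k : ℤ, 0 < j → j ≤ k → k ≤ (K : ℤ) → w k ≤ w j) ∧
  (∀ k : ℤ, 0 ≤ w k) ∧
  (∀ k : ℤ, (K : ℤ) < |k| → w k = 0) ∧
  ∑ k ∈ Finset.Icc (-(K : ℤ)) (K : ℤ), w k = 1

/-- The vertex window `v i`: weight `1/(2i)` for `1 ≤ |k| ≤ i`, else `0`. -/
noncomputable def vertexWindow (i : ℕ) : ℤ → ℝ :=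
  fun k => if 1 ≤ |k| ∧ |k| ≤ (i : ℤ) then 1 / (2 * (i : ℝ)) else 0

lemma eq_of_le_of_le_of_mul_add_mul_eq {𝕜 : Type*} [Field 𝕜] [LinearOrder 𝕜]
    [IsStrictOrderedRing 𝕜] {a b x₁ x₂ y₁ y₂ : 𝕜} (ha : 0 < a) (hb : 0 ≤ b)
    (h₁ : x₁ ≤ y₁) (h₂ : x₂ ≤ y₂) (h : a * x₁ + b * x₂ = a * y₁ + b * y₂) : x₁ = y₁ := by
  nlinarith [mul_le_mul_of_nonneg_left h₂ hb]

lemma sum_Icc_ite_abs_le (K i : ℕ) (hiK : i ≤ K) (c : ℝ) :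
    ∑ k ∈ Icc (-(K : ℤ)) K, (if 1 ≤ |k| ∧ |k| ≤ (i : ℤ) then c else 0) = 2 * i * c := by
  have hfilter : {k ∈ Icc (-(K : ℤ)) K | 1 ≤ |k| ∧ |k| ≤ (i : ℤ)} = (Icc (-(i : ℤ)) i).erase 0 := by
    ext k
    simp only [mem_filter, mem_Icc, mem_erase, abs_le, le_abs]
    omega
  rw [sum_ite, sum_const_zero, add_zero, sum_const, hfilter, nsmul_eq_mul,
    card_erase_of_mem (by simp), Int.card_Icc, show ((i : ℤ) + 1 - -i).toNat - 1 = 2 * i by omega]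
  push_cast
  ring

lemma vertexWindow_eq_ite (i : ℕ) :
    vertexWindow i = fun k => if 1 ≤ |k| ∧ |k| ≤ (i : ℤ) then 1 / (2 * (i : ℝ)) else 0 :=
  rfl

lemma vertexWindow_of_lt_abs {i : ℕ} {k : ℤ} (hk : (i : ℤ) < |k|) : vertexWindow i k = 0 :=
  if_neg fun h => hk.not_ge h.2

lemma vertexWindow_of_one_le_abs {i : ℕ} {k : ℤ} (h₁ : 1 ≤ |k|) (h₂ : |k| ≤ (i : ℤ)) :
    vertexWindow i k = 1 / (2 * (i : ℝ)) :=
  if_pos ⟨h₁, h₂⟩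

lemma taperedWindow_vertexWindow {K i : ℕ} (hi : 1 ≤ i) (hiK : i ≤ K) :
    TaperedWindow K (vertexWindow i) := by
  refine ⟨by simp [vertexWindow], fun k => by simp [vertexWindow], ?_, ?_, ?_, ?_⟩
  · intro j k hj hjk _
    by_cases hk : 1 ≤ |k| ∧ |k| ≤ (i : ℤ)
    · rw [vertexWindow_of_one_le_abs hk.1 hk.2,
        vertexWindow_of_one_le_abs (by rw [abs_of_pos hj]; omega)
          (by rw [abs_of_pos hj]; rw [abs_of_pos (hj.trans_le hjk)] at hk; omega)]
    · rw [vertexWindow, if_neg hk, vertexWindow]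
      split_ifs <;> positivity
  · intro k
    rw [vertexWindow]
    split_ifs <;> positivity
  · intro k hk
    exact vertexWindow_of_lt_abs (by omega)
  · rw [vertexWindow_eq_ite, sum_Icc_ite_abs_le K i hiK]
    have : (i : ℝ) ≠ 0 := by positivity
    field_simp

lemma eq_vertexWindow_of_const {K i : ℕ} (hiK : i ≤ K) {w : ℤ → ℝ} (h0 : w 0 = 0)
    (hsym : ∀ k, w k = w (-k)) (hsum : ∑ k ∈ Icc (-(K : ℤ)) K, w k = 1)
    (hz : ∀ k : ℤ, (i : ℤ) < |k| → w k = 0) (hc : ∀ k : ℤ, 1 ≤ k → k ≤ (i : ℤ) → w k = w 1) :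
    w = vertexWindow i := by
  have hw : w = fun k => if 1 ≤ |k| ∧ |k| ≤ (i : ℤ) then w 1 else 0 := by
    funext k
    split_ifs with hk
    · rcases abs_cases k with ⟨habs, -⟩ | ⟨habs, -⟩
      · exact hc k (by omega) (by omega)
      · rw [hsym k]; exact hc (-k) (by omega) (by omega)
    · rcases eq_or_ne k 0 with rfl | hk0
      · exact h0
      · exact hz k (by have := abs_pos.mpr hk0; omega)
  rw [hw, sum_Icc_ite_abs_le K i hiK] at hsum
  have hw1 : w 1 = 1 / (2 * (i : ℝ)) := eq_one_div_of_mul_eq_one_left (by linarith)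
  rw [hw, hw1, vertexWindow_eq_ite]

theorem stmt11 (K i : ℕ) (hi : 1 ≤ i) (hiK : i ≤ K) :
    vertexWindow i ∈ Set.extremePoints ℝ {w : ℤ → ℝ | TaperedWindow K w} := by
  refine ⟨taperedWindow_vertexWindow hi hiK, ?_⟩
  rintro w₁ ⟨h0, hsym, hmono, hnn, -, hsum⟩ w₂ ⟨-, -, hmono₂, hnn₂, -⟩ ⟨a, b, ha, hb, -, hv⟩
  have hpt (k : ℤ) : a * w₁ k + b * w₂ k = vertexWindow i k := congrFun hv k
  refine eq_vertexWindow_of_const hiK h0 hsym hsum (fun k hk => ?_) (fun k h₁ h₂ => ?_)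
  · refine (eq_of_le_of_le_of_mul_add_mul_eq ha hb.le (hnn k) (hnn₂ k) ?_).symm
    rw [hpt, vertexWindow_of_lt_abs hk]
    ring
  · refine eq_of_le_of_le_of_mul_add_mul_eq ha hb.le (hmono 1 k one_pos h₁ (by omega))
      (hmono₂ 1 k one_pos h₁ (by omega)) ?_
    rw [hpt, hpt, vertexWindow_of_one_le_abs (by rw [abs_of_pos (by omega)]; omega)
      (by rw [abs_of_pos (by omega)]; omega), vertexWindow_of_one_le_abs (by simp) (by simpa)]
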